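/- Let n ≥ 2 and let A be a Young function with ∫_0 (t/A(t))^{1/(n−1)} dt < ∞. Then limsup_{t→0} A_n(λt)/A(t) < ∞ for every λ > 0, where A_n is the Sobolev conjugate of A. -/

import Mathlib

open MeasureTheory Filter Set Topology ENNReal NNReal RealInnerProductSpace

noncomputable section

/-- Euclidean space `ℝⁿ`. -/
abbrev En (n : ℕ) : Type := EuclideanSpace ℝ (Fin n)

/-- A Young function: a convex, left-continuous function `A : [0,∞) → [0,∞]` with `A 0 = 0`,
not identically `0` and not identically `∞` on `(0,∞)`. -/
structure YoungFunction : Type where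
  toFun : ℝ≥0 → ℝ≥0∞
  map_zero' : toFun 0 = 0
  convex' : ∀ s t a b : ℝ≥0, a + b = 1 →
    toFun (a * s + b * t) ≤ (a : ℝ≥0∞) * toFun s + (b : ℝ≥0∞) * toFun t
  leftContinuous' : ∀ t : ℝ≥0, Filter.Tendsto toFun (nhdsWithin t (Set.Iio t)) (nhds (toFun t))
  not_zero' : ∃ t : ℝ≥0, 0 < t ∧ toFun t ≠ 0
  not_top' : ∃ t : ℝ≥0, 0 < t ∧ toFun t ≠ ⊤

instance : CoeFun YoungFunction fun _ => ℝ≥0 → ℝ≥0∞ := ⟨YoungFunction.toFun⟩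

/-- A Young function is non-degenerate if `A t > 0` for all `t > 0`. -/
def YoungFunction.NonDegenerate (A : YoungFunction) : Prop :=
  ∀ t : ℝ≥0, 0 < t → A.toFun t ≠ 0

/-- The `Δ₂`-condition near zero. -/
def Delta2NearZero (A : ℝ≥0 → ℝ≥0∞) : Prop :=
  ∃ c : ℝ≥0, 1 ≤ c ∧ ∃ t₂ : ℝ≥0, 0 < t₂ ∧ ∀ t : ℝ≥0, t ≤ t₂ → A (2 * t) ≤ (c : ℝ≥0∞) * A t

/-- Canonical extension of a function on `[0,∞)` to `[0,∞]`, sending `∞` to `∞`. -/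
def extYF (A : ℝ≥0 → ℝ≥0∞) (t : ℝ≥0∞) : ℝ≥0∞ :=
  if t = ⊤ then ⊤ else A t.toNNReal

/-- The generalized right-continuous inverse `A⁻¹(t) = inf {s ≥ 0 : A s > t}`. -/
def rcInv (A : ℝ≥0 → ℝ≥0∞) (t : ℝ≥0∞) : ℝ≥0∞ :=
  sInf {s : ℝ≥0∞ | ∃ r : ℝ≥0, s = (r : ℝ≥0∞) ∧ t < A r}

/-- Canonical upper extension of a monotone function `E : [0,∞) → [0,∞)` to `[0,∞]`. -/
def extE (E : ℝ≥0 → ℝ≥0) (t : ℝ≥0∞) : ℝ≥0∞ :=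
  ⨆ (s : ℝ≥0) (_ : (s : ℝ≥0∞) ≤ t), (E s : ℝ≥0∞)

/-- The modular `∫ A(|u|/λ) dμ` associated with a Young function. -/
def modular {α : Type*} [MeasurableSpace α] (A : ℝ≥0 → ℝ≥0∞) (μ : Measure α)
    (lam : ℝ≥0) (u : α → ℝ) : ℝ≥0∞ :=
  ∫⁻ x, A (‖u x‖₊ / lam) ∂μ

/-- Membership in the Orlicz space `L^A(μ)`. -/
def MemLA {α : Type*} [MeasurableSpace α] (A : ℝ≥0 → ℝ≥0∞) (μ : Measure α) (u : α → ℝ) : Prop :=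
  AEMeasurable u μ ∧ ∃ lam : ℝ≥0, 0 < lam ∧ modular A μ lam u < ⊤

/-- Membership in the Orlicz heart `E^A(μ)`. -/
def MemEA {α : Type*} [MeasurableSpace α] (A : ℝ≥0 → ℝ≥0∞) (μ : Measure α) (u : α → ℝ) : Prop :=
  AEMeasurable u μ ∧ ∀ lam : ℝ≥0, 0 < lam → modular A μ lam u < ⊤

/-- The Luxemburg norm. -/
def luxNorm {α : Type*} [MeasurableSpace α] (A : ℝ≥0 → ℝ≥0∞) (μ : Measure α) (u : α → ℝ) : ℝ≥0∞ :=
  sInf {l : ℝ≥0∞ | ∃ lam : ℝ≥0, 0 < lam ∧ l = (lam : ℝ≥0∞) ∧ modular A μ lam u ≤ 1}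

/-- The `L^∞` norm (essential supremum of the absolute value). -/
def linftyN {α : Type*} [MeasurableSpace α] (μ : Measure α) (u : α → ℝ) : ℝ≥0∞ :=
  essSup (fun x => (‖u x‖₊ : ℝ≥0∞)) μ

/-- `V` is the weak gradient of `u` on the open set `Ω ⊆ ℝⁿ`. -/
def IsWeakGradOn {n : ℕ} (Ω : Set (En n)) (u : En n → ℝ) (V : En n → En n) : Prop :=
  LocallyIntegrableOn u Ω volume ∧ LocallyIntegrableOn (fun x => ‖V x‖) Ω volume ∧
  ∀ φ : En n → ℝ, ContDiff ℝ (⊤ : ℕ∞) φ → HasCompactSupport φ → tsupport φ ⊆ Ω →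
    ∀ y : En n, (∫ x in Ω, u x * (fderiv ℝ φ x y)) = - ∫ x in Ω, (inner ℝ (V x) y : ℝ) * φ x

/-- Membership in the Orlicz–Sobolev space `W^{1,A}(Ω)`, with weak gradient `V`. -/
def MemW1A {n : ℕ} (A : ℝ≥0 → ℝ≥0∞) (Ω : Set (En n)) (u : En n → ℝ) (V : En n → En n) : Prop :=
  IsWeakGradOn Ω u V ∧ MemLA A (volume.restrict Ω) u ∧
    MemLA A (volume.restrict Ω) (fun x => ‖V x‖)

/-- The norm of `W^{1,A}(Ω)`. -/
def normW1A {n : ℕ} (A : ℝ≥0 → ℝ≥0∞) (Ω : Set (En n)) (u : En n → ℝ) (V : En n → En n) : ℝ≥0∞ :=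
  luxNorm A (volume.restrict Ω) u + luxNorm A (volume.restrict Ω) (fun x => ‖V x‖)

/-- Extension of `u` by `0` outside `Ω`. -/
def hatFn {n : ℕ} (Ω : Set (En n)) (u : En n → ℝ) : En n → ℝ := Ω.indicator u

/-- Membership in the homogeneous Orlicz–Sobolev space `V₀^{1,A}(Ω)`, with weak gradient `V`
of the extension by zero. -/
def MemV01 {n : ℕ} (A : ℝ≥0 → ℝ≥0∞) (Ω : Set (En n)) (u : En n → ℝ) (V : En n → En n) : Prop :=
  IsWeakGradOn (Set.univ) (hatFn Ω u) V ∧ MemLA A volume (fun x => ‖V x‖) ∧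
  ∀ t : ℝ, 0 < t → volume {x : En n | t < |hatFn Ω u x|} < ⊤

/-- Modular convergence in `W^{1,A}(Ω)` with constant `lam`. -/
def ModConvW1 {n : ℕ} (A : ℝ≥0 → ℝ≥0∞) (Ω : Set (En n)) (lam : ℝ≥0)
    (u : ℕ → En n → ℝ) (V : ℕ → En n → En n) (u₀ : En n → ℝ) (V₀ : En n → En n) : Prop :=
  Tendsto (fun k => modular A (volume.restrict Ω) lam (fun x => u k x - u₀ x)) atTop (𝓝 0) ∧
  Tendsto (fun k => modular A (volume.restrict Ω) lam (fun x => ‖V k x - V₀ x‖)) atTop (𝓝 0)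

/-- Modular convergence of gradients in `V₀^{1,A}(Ω)` with constant `lam`. -/
def ModConvV0 {n : ℕ} (A : ℝ≥0 → ℝ≥0∞) (lam : ℝ≥0)
    (V : ℕ → En n → En n) (V₀ : En n → En n) : Prop :=
  Tendsto (fun k => modular A volume lam (fun x => ‖V k x - V₀ x‖)) atTop (𝓝 0)

/-- `T_f` maps `W^{1,A}(Ω)` into `W^{1,B}(Ω)` and is continuous in the modular topology. -/
def MapsModCont {n : ℕ} (A B : ℝ≥0 → ℝ≥0∞) (Ω : Set (En n)) (f : ℝ → ℝ) : Prop :=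
  (∀ u V, MemW1A A Ω u V → ∃ W, MemW1A B Ω (fun x => f (u x)) W) ∧
  ∀ (u : ℕ → En n → ℝ) (V : ℕ → En n → En n) (u₀ : En n → ℝ) (V₀ : En n → En n),
    (∀ k, MemW1A A Ω (u k) (V k)) → MemW1A A Ω u₀ V₀ →
    (∃ lam : ℝ≥0, 0 < lam ∧ ModConvW1 A Ω lam u V u₀ V₀) →
    ∃ (W : ℕ → En n → En n) (W₀ : En n → En n),
      (∀ k, MemW1A B Ω (fun x => f (u k x)) (W k)) ∧
      MemW1A B Ω (fun x => f (u₀ x)) W₀ ∧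
      ∃ lam : ℝ≥0, 0 < lam ∧
        ModConvW1 B Ω lam (fun k x => f (u k x)) W (fun x => f (u₀ x)) W₀

/-- `T_f` maps `V₀^{1,A}(Ω)` into `V₀^{1,B}(Ω)` and is continuous in the modular topology. -/
def MapsModContV0 {n : ℕ} (A B : ℝ≥0 → ℝ≥0∞) (Ω : Set (En n)) (f : ℝ → ℝ) : Prop :=
  (∀ u V, MemV01 A Ω u V → ∃ W, MemV01 B Ω (fun x => f (u x)) W) ∧
  ∀ (u : ℕ → En n → ℝ) (V : ℕ → En n → En n) (u₀ : En n → ℝ) (V₀ : En n → En n),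
    (∀ k, MemV01 A Ω (u k) (V k)) → MemV01 A Ω u₀ V₀ →
    (∃ lam : ℝ≥0, 0 < lam ∧ ModConvV0 A lam V V₀) →
    ∃ (W : ℕ → En n → En n) (W₀ : En n → En n),
      (∀ k, MemV01 B Ω (fun x => f (u k x)) (W k)) ∧
      MemV01 B Ω (fun x => f (u₀ x)) W₀ ∧
      ∃ lam : ℝ≥0, 0 < lam ∧ ModConvV0 B lam W W₀

/-- The integrand `(t/A(t))^{1/(σ-1)}` of the Sobolev-conjugate construction. -/
def integrandA (A : ℝ≥0 → ℝ≥0∞) (σ : ℝ) (t : ℝ) : ℝ≥0∞ :=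
  (ENNReal.ofReal t / A t.toNNReal) ^ ((1 : ℝ) / (σ - 1))

/-- Convergence of `∫^∞ (t/A(t))^{1/(σ-1)} dt` near infinity. -/
def ConvAtTop (A : ℝ≥0 → ℝ≥0∞) (σ : ℝ) : Prop :=
  ∃ c : ℝ, 0 < c ∧ ∫⁻ t in Set.Ioi c, integrandA A σ t < ⊤

/-- Divergence of `∫^∞ (t/A(t))^{1/(σ-1)} dt` near infinity. -/
def DivAtTop (A : ℝ≥0 → ℝ≥0∞) (σ : ℝ) : Prop :=
  ∀ c : ℝ, 0 < c → ∫⁻ t in Set.Ioi c, integrandA A σ t = ⊤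

/-- Convergence of `∫_0 (t/A(t))^{1/(σ-1)} dt` near zero. -/
def ConvAtZero (A : ℝ≥0 → ℝ≥0∞) (σ : ℝ) : Prop :=
  ∃ c : ℝ, 0 < c ∧ ∫⁻ t in Set.Ioo 0 c, integrandA A σ t < ⊤

/-- The function `H_σ(s) = (∫_0^s (t/A(t))^{1/(σ-1)} dt)^{1/σ'}`. -/
def Hn (A : ℝ≥0 → ℝ≥0∞) (σ : ℝ) (s : ℝ) : ℝ :=
  ((∫⁻ t in Set.Ioo 0 s, integrandA A σ t) ^ ((σ - 1) / σ)).toReal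

open scoped Classical in
/-- The Sobolev conjugate `A_σ(t) = A(H_σ⁻¹(t))`, with value `∞` when `t` exceeds `sup H_σ`. -/
def SobConj (A : ℝ≥0 → ℝ≥0∞) (σ : ℝ) (t : ℝ≥0) : ℝ≥0∞ :=
  if ({s : ℝ | 0 ≤ s ∧ (t : ℝ) ≤ Hn A σ s}).Nonempty then
    A (Real.toNNReal (sInf {s : ℝ | 0 ≤ s ∧ (t : ℝ) ≤ Hn A σ s}))
  else ⊤

/-- Equivalence of Young functions near infinity. -/
def EquivNearInfty (A B : ℝ≥0 → ℝ≥0∞) : Prop :=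
  ∃ c : ℝ≥0, 0 < c ∧ ∃ t₀ : ℝ≥0, 0 < t₀ ∧ ∀ t : ℝ≥0, t₀ ≤ t →
    B (t / c) ≤ A t ∧ A t ≤ B (c * t)

/-- The divergence of a smooth vector field on `ℝⁿ`. -/
def divergence {n : ℕ} (φ : En n → En n) (x : En n) : ℝ :=
  ∑ i, fderiv ℝ φ x (EuclideanSpace.single i (1 : ℝ)) i

/-- The perimeter of `G` relative to `Ω`, defined by duality with smooth vector fields. -/
def relPerimeter {n : ℕ} (G Ω : Set (En n)) : ℝ≥0∞ :=
  ⨆ (φ : En n → En n) (_ : ContDiff ℝ (⊤ : ℕ∞) φ ∧ HasCompactSupport φ ∧ tsupport φ ⊆ Ω ∧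
      ∀ x, ‖φ x‖ ≤ 1), ENNReal.ofReal (∫ x in G, divergence φ x)

/-- The class `𝒢_{1/σ'}` of open sets of finite measure supporting a relative isoperimetric
inequality with exponent `1/σ' = (σ-1)/σ`. -/
def MemGClass {n : ℕ} (Ω : Set (En n)) (σ : ℝ) : Prop :=
  IsOpen Ω ∧ volume Ω < ⊤ ∧ ∃ c : ℝ≥0, 0 < c ∧
    ∀ G : Set (En n), G ⊆ Ω → MeasurableSet G →
      (c : ℝ≥0∞) * (min (volume G) (volume (Ω \ G))) ^ ((σ - 1) / σ) ≤ relPerimeter G Ω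

/-- The `W^{1,1}` norm of a pair (function, gradient) on `Ω`. -/
def normW11 {n : ℕ} (Ω : Set (En n)) (u : En n → ℝ) (V : En n → En n) : ℝ≥0∞ :=
  (∫⁻ x in Ω, (‖u x‖₊ : ℝ≥0∞)) + ∫⁻ x in Ω, (‖V x‖₊ : ℝ≥0∞)

/-- The `W^{1,∞}` norm of a pair (function, gradient) on `Ω`. -/
def normW1inf {n : ℕ} (Ω : Set (En n)) (u : En n → ℝ) (V : En n → En n) : ℝ≥0∞ :=
  essSup (fun x => (‖u x‖₊ : ℝ≥0∞)) (volume.restrict Ω) +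
    essSup (fun x => (‖V x‖₊ : ℝ≥0∞)) (volume.restrict Ω)

/-- `Ω` is an extension domain: there is a linear extension operator bounded from
`W^{1,1}(Ω)` to `W^{1,1}(ℝⁿ)` and from `W^{1,∞}(Ω)` to `W^{1,∞}(ℝⁿ)`. -/
def IsExtensionDomain {n : ℕ} (Ω : Set (En n)) : Prop :=
  IsOpen Ω ∧ ∃ Ext : (En n → ℝ) →ₗ[ℝ] (En n → ℝ),
    (∀ u : En n → ℝ, Set.EqOn (Ext u) u Ω) ∧
    ∃ C : ℝ≥0∞,
      (∀ u V, IsWeakGradOn Ω u V → normW11 Ω u V < ⊤ →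
        ∃ W, IsWeakGradOn (Set.univ) (Ext u) W ∧
          normW11 (Set.univ) (Ext u) W ≤ C * normW11 Ω u V) ∧
      (∀ u V, IsWeakGradOn Ω u V → normW1inf Ω u V < ⊤ →
        ∃ W, IsWeakGradOn (Set.univ) (Ext u) W ∧
          normW1inf (Set.univ) (Ext u) W ≤ C * normW1inf Ω u V)

/-- The a.e. derivative bound `|f'(t)| ≤ κ E(κ|t|)`. -/
def DerivBound (f : ℝ → ℝ) (κ : ℝ≥0) (E : ℝ≥0 → ℝ≥0) : Prop :=
  ∀ᵐ t : ℝ, ∀ d : ℝ, HasDerivAt f d t →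
    |d| ≤ ((κ * E (κ * Real.toNNReal |t|) : ℝ≥0) : ℝ)

/-- An `n`-dimensional Young function: convex, even, lower semicontinuous,
finite near `0`, vanishing at `0` and tending to `∞` at infinity. -/
structure YoungFunctionN (n : ℕ) : Type where
  toFun : En n → ℝ≥0∞
  map_zero' : toFun 0 = 0
  convex' : ∀ ξ η : En n, ∀ a b : ℝ, 0 ≤ a → 0 ≤ b → a + b = 1 →
    toFun (a • ξ + b • η) ≤ ENNReal.ofReal a * toFun ξ + ENNReal.ofReal b * toFun η
  even' : ∀ ξ : En n, toFun (-ξ) = toFun ξ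
  lsc' : LowerSemicontinuous toFun
  finite_near_zero' : ∃ ε : ℝ, 0 < ε ∧ ∀ ξ : En n, ‖ξ‖ < ε → toFun ξ < ⊤
  tendsto_top' : Tendsto toFun (Bornology.cobounded (En n)) (𝓝 ⊤)

instance {n : ℕ} : CoeFun (YoungFunctionN n) fun _ => En n → ℝ≥0∞ := ⟨YoungFunctionN.toFun⟩

/-- A non-degenerate `n`-dimensional Young function. -/
def YoungFunctionN.NonDegenerate {n : ℕ} (Φ : YoungFunctionN n) : Prop :=
  ∀ ξ : En n, ξ ≠ 0 → Φ.toFun ξ ≠ 0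

/-- The vector-valued modular `∫ Φ(U/λ) dμ`. -/
def modularV {n : ℕ} (Φ : YoungFunctionN n) (μ : Measure (En n)) (lam : ℝ≥0)
    (U : En n → En n) : ℝ≥0∞ :=
  ∫⁻ x, Φ.toFun (((lam : ℝ))⁻¹ • U x) ∂μ

/-- Membership in the anisotropic homogeneous Orlicz–Sobolev space `V₀^{1,Φ}(Ω)`. -/
def MemV01Phi {n : ℕ} (Φ : YoungFunctionN n) (Ω : Set (En n)) (u : En n → ℝ)
    (V : En n → En n) : Prop :=
  IsWeakGradOn (Set.univ) (hatFn Ω u) V ∧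
  (AEMeasurable V volume ∧ ∃ lam : ℝ≥0, 0 < lam ∧ modularV Φ volume lam V < ⊤) ∧
  ∀ t : ℝ, 0 < t → volume {x : En n | t < |hatFn Ω u x|} < ⊤

/-- Modular convergence of gradients in `V₀^{1,Φ}(Ω)` with constant `lam`. -/
def ModConvV0Phi {n : ℕ} (Φ : YoungFunctionN n) (lam : ℝ≥0)
    (V : ℕ → En n → En n) (V₀ : En n → En n) : Prop :=
  Tendsto (fun k => modularV Φ volume lam (fun x => V k x - V₀ x)) atTop (𝓝 0)

/-- `T_f` maps `V₀^{1,Φ}(Ω)` into `V₀^{1,Ψ}(Ω)` and is continuous in the modular topology. -/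
def MapsModContV0Phi {n : ℕ} (Φ Ψ : YoungFunctionN n) (Ω : Set (En n)) (f : ℝ → ℝ) : Prop :=
  (∀ u V, MemV01Phi Φ Ω u V → ∃ W, MemV01Phi Ψ Ω (fun x => f (u x)) W) ∧
  ∀ (u : ℕ → En n → ℝ) (V : ℕ → En n → En n) (u₀ : En n → ℝ) (V₀ : En n → En n),
    (∀ k, MemV01Phi Φ Ω (u k) (V k)) → MemV01Phi Φ Ω u₀ V₀ →
    (∃ lam : ℝ≥0, 0 < lam ∧ ModConvV0Phi Φ lam V V₀) →
    ∃ (W : ℕ → En n → En n) (W₀ : En n → En n),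
      (∀ k, MemV01Phi Ψ Ω (fun x => f (u k x)) (W k)) ∧
      MemV01Phi Ψ Ω (fun x => f (u₀ x)) W₀ ∧
      ∃ lam : ℝ≥0, 0 < lam ∧ ModConvV0Phi Ψ lam W W₀

/-- `Φo` is the radial "average in measure" `Φ_∘` of the `n`-dimensional Young function `Φ`. -/
def IsCircAvg {n : ℕ} (Φ : YoungFunctionN n) (Φo : ℝ≥0 → ℝ≥0∞) : Prop :=
  ∀ t : ℝ≥0∞, volume {ξ : En n | Φo ‖ξ‖₊ ≤ t} = volume {ξ : En n | Φ.toFun ξ ≤ t}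

/-! ### One-dimensional versions -/

/-- `V` is the weak derivative of `u` on the open set `Ω ⊆ ℝ`. -/
def IsWeakDerivOn (Ω : Set ℝ) (u V : ℝ → ℝ) : Prop :=
  LocallyIntegrableOn u Ω volume ∧ LocallyIntegrableOn V Ω volume ∧
  ∀ φ : ℝ → ℝ, ContDiff ℝ (⊤ : ℕ∞) φ → HasCompactSupport φ → tsupport φ ⊆ Ω →
    (∫ x in Ω, u x * deriv φ x) = - ∫ x in Ω, V x * φ x

/-- Membership in `W^{1,A}(Ω)` for `Ω ⊆ ℝ`. -/
def MemW1A1 (A : ℝ≥0 → ℝ≥0∞) (Ω : Set ℝ) (u V : ℝ → ℝ) : Prop :=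
  IsWeakDerivOn Ω u V ∧ MemLA A (volume.restrict Ω) u ∧ MemLA A (volume.restrict Ω) V

/-- Extension by zero, one-dimensional case. -/
def hatFn1 (Ω : Set ℝ) (u : ℝ → ℝ) : ℝ → ℝ := Ω.indicator u

/-- Membership in `V₀^{1,A}(Ω)` for `Ω ⊆ ℝ`. -/
def MemV011 (A : ℝ≥0 → ℝ≥0∞) (Ω : Set ℝ) (u V : ℝ → ℝ) : Prop :=
  IsWeakDerivOn (Set.univ) (hatFn1 Ω u) V ∧ MemLA A volume V ∧
  ∀ t : ℝ, 0 < t → volume {x : ℝ | t < |hatFn1 Ω u x|} < ⊤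

/-- Modular convergence in `W^{1,A}(Ω)`, `Ω ⊆ ℝ`, with constant `lam`. -/
def ModConvW1R (A : ℝ≥0 → ℝ≥0∞) (Ω : Set ℝ) (lam : ℝ≥0)
    (u V : ℕ → ℝ → ℝ) (u₀ V₀ : ℝ → ℝ) : Prop :=
  Tendsto (fun k => modular A (volume.restrict Ω) lam (fun x => u k x - u₀ x)) atTop (𝓝 0) ∧
  Tendsto (fun k => modular A (volume.restrict Ω) lam (fun x => V k x - V₀ x)) atTop (𝓝 0)

/-- Modular convergence of derivatives in `V₀^{1,A}(Ω)`, `Ω ⊆ ℝ`, with constant `lam`. -/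
def ModConvV0R (A : ℝ≥0 → ℝ≥0∞) (lam : ℝ≥0) (V : ℕ → ℝ → ℝ) (V₀ : ℝ → ℝ) : Prop :=
  Tendsto (fun k => modular A volume lam (fun x => V k x - V₀ x)) atTop (𝓝 0)

/-- `T_f` maps `W^{1,A}(Ω)` into `W^{1,B}(Ω)` continuously in the modular topology, `Ω ⊆ ℝ`. -/
def MapsModContR (A B : ℝ≥0 → ℝ≥0∞) (Ω : Set ℝ) (f : ℝ → ℝ) : Prop :=
  (∀ u V, MemW1A1 A Ω u V → ∃ W, MemW1A1 B Ω (fun x => f (u x)) W) ∧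
  ∀ (u V : ℕ → ℝ → ℝ) (u₀ V₀ : ℝ → ℝ),
    (∀ k, MemW1A1 A Ω (u k) (V k)) → MemW1A1 A Ω u₀ V₀ →
    (∃ lam : ℝ≥0, 0 < lam ∧ ModConvW1R A Ω lam u V u₀ V₀) →
    ∃ (W : ℕ → ℝ → ℝ) (W₀ : ℝ → ℝ),
      (∀ k, MemW1A1 B Ω (fun x => f (u k x)) (W k)) ∧
      MemW1A1 B Ω (fun x => f (u₀ x)) W₀ ∧
      ∃ lam : ℝ≥0, 0 < lam ∧
        ModConvW1R B Ω lam (fun k x => f (u k x)) W (fun x => f (u₀ x)) W₀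

/-- `T_f` maps `V₀^{1,A}(Ω)` into `V₀^{1,B}(Ω)` continuously in the modular topology, `Ω ⊆ ℝ`. -/
def MapsModContV0R (A B : ℝ≥0 → ℝ≥0∞) (Ω : Set ℝ) (f : ℝ → ℝ) : Prop :=
  (∀ u V, MemV011 A Ω u V → ∃ W, MemV011 B Ω (fun x => f (u x)) W) ∧
  ∀ (u V : ℕ → ℝ → ℝ) (u₀ V₀ : ℝ → ℝ),
    (∀ k, MemV011 A Ω (u k) (V k)) → MemV011 A Ω u₀ V₀ →
    (∃ lam : ℝ≥0, 0 < lam ∧ ModConvV0R A lam V V₀) →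
    ∃ (W : ℕ → ℝ → ℝ) (W₀ : ℝ → ℝ),
      (∀ k, MemV011 B Ω (fun x => f (u k x)) (W k)) ∧
      MemV011 B Ω (fun x => f (u₀ x)) W₀ ∧
      ∃ lam : ℝ≥0, 0 < lam ∧ ModConvV0R B lam W W₀


/-- Convexity with `A 0 = 0` gives `A t ≤ (t / t₁) * A t₁` for `t ≤ t₁`. -/
lemma yf_le_mul (A : YoungFunction) {t t₁ : ℝ≥0} (ht₁ : t₁ ≠ 0) (h : t ≤ t₁) :
    A.toFun t ≤ (↑(t / t₁) : ℝ≥0∞) * A.toFun t₁ := by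
  have ha : t / t₁ ≤ 1 := by
    rw [div_le_iff₀ (pos_iff_ne_zero.mpr ht₁)]; simpa using h
  have hab : t / t₁ + (1 - t / t₁) = 1 := add_tsub_cancel_of_le ha
  have hc := A.convex' t₁ 0 (t / t₁) (1 - t / t₁) hab
  have h1 : t / t₁ * t₁ + (1 - t / t₁) * 0 = t := by
    rw [mul_zero, add_zero, div_mul_cancel₀ _ ht₁]
  rw [h1, A.map_zero', mul_zero, add_zero] at hc
  exact hc

/-- A Young function is monotone. -/
lemma yf_mono (A : YoungFunction) : Monotone A.toFun := by
  intro s t hst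
  rcases eq_or_ne t 0 with rfl | ht
  · obtain rfl : s = 0 := le_antisymm hst zero_le
    exact le_rfl
  · calc A.toFun s ≤ (↑(s / t) : ℝ≥0∞) * A.toFun t := yf_le_mul A ht hst
      _ ≤ 1 * A.toFun t := by
        gcongr
        have : s / t ≤ 1 := by rw [div_le_iff₀ (pos_iff_ne_zero.mpr ht)]; simpa using hst
        exact_mod_cast this
      _ = A.toFun t := one_mul _

/-- A Young function is eventually below any positive level near zero. -/
lemma yf_small (A : YoungFunction) {ε : ℝ≥0} (hε : 0 < ε) :
    ∃ δ : ℝ≥0, 0 < δ ∧ ∀ t ≤ δ, A.toFun t ≤ (ε : ℝ≥0∞) := by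
  obtain ⟨t₁, ht₁, hfin⟩ := A.not_top'
  set k := (A.toFun t₁).toNNReal with hk
  have hAt₁ : A.toFun t₁ = (k : ℝ≥0∞) := (ENNReal.coe_toNNReal hfin).symm
  refine ⟨min t₁ (t₁ * (ε / (k + 1))), lt_min ht₁ ?_, ?_⟩
  · exact mul_pos ht₁ (div_pos hε (by positivity))
  · intro t ht
    have ht1 : t ≤ t₁ := le_trans ht (min_le_left _ _)
    have ht2 : t / t₁ ≤ ε / (k + 1) := by
      rw [div_le_iff₀ ht₁]
      calc t ≤ t₁ * (ε / (k + 1)) := le_trans ht (min_le_right _ _)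
        _ = ε / (k + 1) * t₁ := mul_comm _ _
    calc A.toFun t ≤ (↑(t / t₁) : ℝ≥0∞) * A.toFun t₁ := yf_le_mul A ht₁.ne' ht1
      _ = ↑(t / t₁ * k) := by rw [hAt₁, ← ENNReal.coe_mul]
      _ ≤ (ε : ℝ≥0∞) := by
        apply ENNReal.coe_le_coe.mpr
        calc t / t₁ * k ≤ ε / (k + 1) * (k + 1) :=
              mul_le_mul' ht2 (le_add_of_nonneg_right zero_le_one)
          _ = ε := div_mul_cancel₀ _ (by positivity)

/-- Convergence of the integral near zero forces non-degeneracy. -/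
lemma yf_nondeg (A : YoungFunction) {n : ℕ} (hn : 2 ≤ n) (hA0 : ConvAtZero (⇑A) n) :
    ∀ t : ℝ≥0, 0 < t → A.toFun t ≠ 0 := by
  intro t ht h0
  obtain ⟨c, hc, hint⟩ := hA0
  set δ := min c (t : ℝ) with hδdef
  have hδ : 0 < δ := lt_min hc (by exact_mod_cast ht)
  have hp : (0 : ℝ) < 1 / ((n : ℝ) - 1) := by
    have h2 : (2 : ℝ) ≤ (n : ℝ) := by exact_mod_cast hn
    have : (1 : ℝ) ≤ (n : ℝ) - 1 := by linarith
    positivity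
  have key : ∀ x ∈ Set.Ioo (0 : ℝ) δ, integrandA (⇑A) n x = ⊤ := by
    intro x hx
    have hx0 : 0 < x := hx.1
    have hxt : A.toFun x.toNNReal = 0 := by
      have hle : x.toNNReal ≤ t := by
        have : x ≤ (t : ℝ) := le_of_lt (lt_of_lt_of_le hx.2 (min_le_right _ _))
        calc x.toNNReal ≤ ((t : ℝ)).toNNReal := Real.toNNReal_mono this
          _ = t := Real.toNNReal_coe
      exact le_antisymm (h0 ▸ yf_mono A hle) zero_le
    unfold integrandA
    rw [hxt, ENNReal.div_zero (by simpa using hx0 : ENNReal.ofReal x ≠ 0)]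
    exact ENNReal.top_rpow_of_pos hp
  have htop : ∫⁻ x in Set.Ioo (0 : ℝ) δ, integrandA (⇑A) n x = ⊤ := by
    rw [setLIntegral_congr_fun measurableSet_Ioo key, setLIntegral_const,
      Real.volume_Ioo]
    rw [ENNReal.top_mul]
    simp [hδ]
  have hsub : Set.Ioo (0 : ℝ) δ ⊆ Set.Ioo 0 c := Set.Ioo_subset_Ioo le_rfl (min_le_left _ _)
  have := lt_of_le_of_lt (htop ▸ lintegral_mono_set hsub) hint
  exact absurd this (by simp)

/-- For a Young function with converging integral at zero, the Sobolev
conjugate satisfies `limsup_{t→0} A_n(λ t)/A(t) < ∞` for every `λ > 0`. -/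
theorem limsup_sobolev_conjugate_div_lt_top
    (n : ℕ) (hn : 2 ≤ n) (A : YoungFunction) (hA0 : ConvAtZero (⇑A) n) :
    ∀ lam : ℝ≥0, 0 < lam →
      Filter.limsup (fun t : ℝ≥0 => SobConj (⇑A) n (lam * t) / A.toFun t) (𝓝[>] 0) < ⊤ := by
  intro lam hlam
  have hnd := yf_nondeg A hn hA0
  obtain ⟨c, hc, hint⟩ := hA0
  have h2r : (2 : ℝ) ≤ (n : ℝ) := by exact_mod_cast hn
  have hnr0 : (n : ℝ) ≠ 0 := by linarith
  have hnr1 : (0 : ℝ) < (n : ℝ) - 1 := by linarith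
  have hp : (0 : ℝ) < 1 / ((n : ℝ) - 1) := by positivity
  have hq : (0 : ℝ) < ((n : ℝ) - 1) / (n : ℝ) := by positivity
  have hη0 : (0 : ℝ≥0) < (2 * lam)⁻¹ := by positivity
  set η : ℝ≥0 := (2 * lam)⁻¹ with hηdef
  have hε : (0 : ℝ≥0) < η ^ n := pow_pos hη0 n
  obtain ⟨δ, hδ, hsmall⟩ := yf_small A hε
  have hδ' : (0 : ℝ≥0) < min δ c.toNNReal := lt_min hδ (Real.toNNReal_pos.mpr hc)
  have hev : ∀ᶠ t : ℝ≥0 in 𝓝[>] 0,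
      SobConj (⇑A) n (lam * t) / A.toFun t ≤ 1 := by
    filter_upwards [self_mem_nhdsWithin,
      mem_nhdsWithin_of_mem_nhds (Iic_mem_nhds hδ')] with t ht htle
    have ht0 : (0 : ℝ≥0) < t := ht
    have hts : (0 : ℝ) < (t : ℝ) := by exact_mod_cast ht0
    have htδ : t ≤ δ := le_trans htle (min_le_left _ _)
    have htc : (t : ℝ) ≤ c := by
      have h1 : t ≤ c.toNNReal := le_trans htle (min_le_right _ _)
      calc (t : ℝ) ≤ (c.toNNReal : ℝ) := by exact_mod_cast h1
        _ = c := Real.coe_toNNReal c hc.le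
    set s : ℝ := (t : ℝ) with hsdef
    have hAne : A.toFun t ≠ 0 := hnd t ht0
    have hAle : A.toFun t ≤ ((η ^ n : ℝ≥0) : ℝ≥0∞) := hsmall t htδ
    have hAtop : A.toFun t ≠ ⊤ := (lt_of_le_of_lt hAle ENNReal.coe_lt_top).ne
    set I := ∫⁻ x in Set.Ioo (0 : ℝ) s, integrandA (⇑A) n x with hIdef
    have hIle : I ≤ ∫⁻ x in Set.Ioo 0 c, integrandA (⇑A) n x :=
      lintegral_mono_set (Set.Ioo_subset_Ioo le_rfl htc)
    have hItop : I ≠ ⊤ := (lt_of_le_of_lt hIle hint).ne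
    have hX0 : ENNReal.ofReal (s / 2) ≠ 0 := by
      simp only [ne_eq, ENNReal.ofReal_eq_zero, not_le]; positivity
    have hXtop : ENNReal.ofReal (s / 2) ≠ ⊤ := ENNReal.ofReal_ne_top
    -- lower bound for the integral
    have hlow : (ENNReal.ofReal (s / 2) / A.toFun t) ^ ((1 : ℝ) / ((n : ℝ) - 1))
        * ENNReal.ofReal (s / 2) ≤ I := by
      have h1 : ∀ x ∈ Set.Ioo (s / 2) s,
          (ENNReal.ofReal (s / 2) / A.toFun t) ^ ((1 : ℝ) / ((n : ℝ) - 1))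
            ≤ integrandA (⇑A) n x := by
        intro x hx
        unfold integrandA
        apply ENNReal.rpow_le_rpow _ hp.le
        apply ENNReal.div_le_div (ENNReal.ofReal_le_ofReal hx.1.le)
        apply yf_mono A
        calc x.toNNReal ≤ s.toNNReal := Real.toNNReal_mono hx.2.le
          _ = t := Real.toNNReal_coe
      calc (ENNReal.ofReal (s / 2) / A.toFun t) ^ ((1 : ℝ) / ((n : ℝ) - 1))
            * ENNReal.ofReal (s / 2)
          = ∫⁻ _ in Set.Ioo (s / 2) s,
              (ENNReal.ofReal (s / 2) / A.toFun t) ^ ((1 : ℝ) / ((n : ℝ) - 1)) := by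
            rw [setLIntegral_const, Real.volume_Ioo]
            congr 1
            ring_nf
        _ ≤ ∫⁻ x in Set.Ioo (s / 2) s, integrandA (⇑A) n x :=
            setLIntegral_mono' measurableSet_Ioo h1
        _ ≤ I := lintegral_mono_set (Set.Ioo_subset_Ioo (by positivity) le_rfl)
    -- key inequality
    have hkey : ENNReal.ofReal (s / 2) / (A.toFun t) ^ ((1 : ℝ) / (n : ℝ))
        ≤ I ^ (((n : ℝ) - 1) / (n : ℝ)) := by
      have hcomp : ((ENNReal.ofReal (s / 2) / A.toFun t) ^ ((1 : ℝ) / ((n : ℝ) - 1))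
          * ENNReal.ofReal (s / 2)) ^ (((n : ℝ) - 1) / (n : ℝ))
          = ENNReal.ofReal (s / 2) / (A.toFun t) ^ ((1 : ℝ) / (n : ℝ)) := by
        have e1 : ((1 : ℝ) / ((n : ℝ) - 1) + 1) * (((n : ℝ) - 1) / (n : ℝ)) = 1 := by
          field_simp
          ring
        have e2 : ((1 : ℝ) / ((n : ℝ) - 1)) * (((n : ℝ) - 1) / (n : ℝ)) = 1 / (n : ℝ) := by
          field_simp
        have hXp : ENNReal.ofReal (s / 2) ^ ((1 : ℝ) / ((n : ℝ) - 1)) * ENNReal.ofReal (s / 2)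
            = ENNReal.ofReal (s / 2) ^ ((1 : ℝ) / ((n : ℝ) - 1) + 1) := by
          rw [ENNReal.rpow_add _ _ hX0 hXtop, ENNReal.rpow_one]
        rw [ENNReal.div_rpow_of_nonneg _ _ hp.le, div_eq_mul_inv, mul_right_comm,
          ← div_eq_mul_inv, hXp, ENNReal.div_rpow_of_nonneg _ _ hq.le,
          ← ENNReal.rpow_mul, ← ENNReal.rpow_mul, e1, e2, ENNReal.rpow_one]
      calc ENNReal.ofReal (s / 2) / (A.toFun t) ^ ((1 : ℝ) / (n : ℝ))
          = ((ENNReal.ofReal (s / 2) / A.toFun t) ^ ((1 : ℝ) / ((n : ℝ) - 1))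
              * ENNReal.ofReal (s / 2)) ^ (((n : ℝ) - 1) / (n : ℝ)) := hcomp.symm
        _ ≤ I ^ (((n : ℝ) - 1) / (n : ℝ)) := ENNReal.rpow_le_rpow hlow hq.le
    have hIqtop : I ^ (((n : ℝ) - 1) / (n : ℝ)) ≠ ⊤ :=
      ENNReal.rpow_ne_top_of_nonneg hq.le hItop
    have hden0 : (A.toFun t) ^ ((1 : ℝ) / (n : ℝ)) ≠ 0 := by
      simp only [ne_eq, ENNReal.rpow_eq_zero_iff, not_or, not_and]
      exact ⟨fun h => absurd h hAne, fun h => absurd h hAtop⟩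
    have hdent : (A.toFun t) ^ ((1 : ℝ) / (n : ℝ)) ≠ ⊤ :=
      ENNReal.rpow_ne_top_of_nonneg (by positivity) hAtop
    have hrle : ((A.toFun t) ^ ((1 : ℝ) / (n : ℝ))).toReal ≤ (η : ℝ) := by
      have h1 : (A.toFun t) ^ ((1 : ℝ) / (n : ℝ)) ≤ (η : ℝ≥0∞) := by
        calc (A.toFun t) ^ ((1 : ℝ) / (n : ℝ))
            ≤ ((η ^ n : ℝ≥0) : ℝ≥0∞) ^ ((1 : ℝ) / (n : ℝ)) :=
              ENNReal.rpow_le_rpow hAle (by positivity)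
          _ = (η : ℝ≥0∞) := by
              rw [ENNReal.coe_pow, ← ENNReal.rpow_natCast (η : ℝ≥0∞) n,
                ← ENNReal.rpow_mul, mul_one_div, div_self hnr0, ENNReal.rpow_one]
      calc ((A.toFun t) ^ ((1 : ℝ) / (n : ℝ))).toReal
          ≤ ((η : ℝ≥0∞)).toReal := ENNReal.toReal_mono ENNReal.coe_ne_top h1
        _ = (η : ℝ) := ENNReal.coe_toReal η
    have hrpos : 0 < ((A.toFun t) ^ ((1 : ℝ) / (n : ℝ))).toReal :=
      ENNReal.toReal_pos hden0 hdent
    have hHn : ((lam * t : ℝ≥0) : ℝ) ≤ Hn (⇑A) n s := by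
      have h2 : (ENNReal.ofReal (s / 2) / (A.toFun t) ^ ((1 : ℝ) / (n : ℝ))).toReal
          ≤ Hn (⇑A) n s := by
        unfold Hn
        exact ENNReal.toReal_mono hIqtop hkey
      have h3 : (ENNReal.ofReal (s / 2) / (A.toFun t) ^ ((1 : ℝ) / (n : ℝ))).toReal
          = (s / 2) / ((A.toFun t) ^ ((1 : ℝ) / (n : ℝ))).toReal := by
        rw [ENNReal.toReal_div, ENNReal.toReal_ofReal (by positivity)]
      have hηr : (η : ℝ) = (2 * (lam : ℝ))⁻¹ := by
        rw [hηdef]; push_cast; ring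
      have h4 : (lam : ℝ) * s ≤
          (s / 2) / ((A.toFun t) ^ ((1 : ℝ) / (n : ℝ))).toReal := by
        have hlam0 : (0 : ℝ) < (lam : ℝ) := by exact_mod_cast hlam
        rw [le_div_iff₀ hrpos]
        calc (lam : ℝ) * s * ((A.toFun t) ^ ((1 : ℝ) / (n : ℝ))).toReal
            ≤ (lam : ℝ) * s * (η : ℝ) := by
              apply mul_le_mul_of_nonneg_left hrle (by positivity)
          _ = s / 2 := by rw [hηr]; field_simp
        
      push_cast
      calc (lam : ℝ) * (t : ℝ) ≤ (s / 2) / ((A.toFun t) ^ ((1 : ℝ) / (n : ℝ))).toReal := h4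
        _ = (ENNReal.ofReal (s / 2) / (A.toFun t) ^ ((1 : ℝ) / (n : ℝ))).toReal := h3.symm
        _ ≤ Hn (⇑A) n s := h2
    -- conclude
    set S := {s' : ℝ | 0 ≤ s' ∧ (((lam * t : ℝ≥0) : ℝ)) ≤ Hn (⇑A) n s'} with hSdef
    have hsmem : s ∈ S := ⟨hts.le, hHn⟩
    have hSne : S.Nonempty := ⟨s, hsmem⟩
    have hbdd : BddBelow S := ⟨0, fun x hx => hx.1⟩
    have hinf : sInf S ≤ s := csInf_le hbdd hsmem
    have hsc : SobConj (⇑A) n (lam * t) = A.toFun (Real.toNNReal (sInf S)) := by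
      unfold SobConj
      rw [if_pos hSne]
    have hAs : A.toFun (Real.toNNReal (sInf S)) ≤ A.toFun t := by
      apply yf_mono A
      calc (sInf S).toNNReal ≤ s.toNNReal := Real.toNNReal_mono hinf
        _ = t := Real.toNNReal_coe
    calc SobConj (⇑A) n (lam * t) / A.toFun t
        ≤ A.toFun t / A.toFun t := by
          rw [hsc]; exact ENNReal.div_le_div_right hAs _
      _ ≤ 1 := ENNReal.div_self_le_one
  calc Filter.limsup (fun t : ℝ≥0 => SobConj (⇑A) n (lam * t) / A.toFun t) (𝓝[>] 0)
      ≤ 1 := Filter.limsup_le_of_le (by isBoundedDefault) hev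
    _ < ⊤ := ENNReal.one_lt_top

end
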